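/- Let r > 2 be an irrational real number. Then there is no cohomomorphism from the open circle graph E_r^o to the closed circle graph E_r^c; in particular, E_r^c and E_r^o are not equivalent under cohomomorphism. -/

import Mathlib

open SimpleGraph

/-- The fraction graph `E_{p/q}` on vertex set `ZMod p`: distinct `u, v` are adjacent
iff the representative of `u - v` or of `v - u` in `{0, …, p-1}` is strictly less than `q`. -/
def fractionGraph (p q : ℕ) : SimpleGraph (ZMod p) where
  Adj u v := u ≠ v ∧ ((u - v).val < q ∨ (v - u).val < q)
  symm := ⟨fun _ _ h => ⟨h.1.symm, h.2.symm⟩⟩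
  loopless := ⟨fun _ h => h.1 rfl⟩

/-- The cycle graph `C_n` on vertex set `ZMod n`: `i` is adjacent to `i ± 1`. -/
def cycleGraphZMod (n : ℕ) : SimpleGraph (ZMod n) where
  Adj u v := u ≠ v ∧ (u - v = 1 ∨ v - u = 1)
  symm := ⟨fun _ _ h => ⟨h.1.symm, h.2.symm⟩⟩
  loopless := ⟨fun _ h => h.1 rfl⟩

/-- The strong product of two simple graphs. -/
def strongProd {α β : Type*} (G : SimpleGraph α) (H : SimpleGraph β) :
    SimpleGraph (α × β) where
  Adj x y := x ≠ y ∧ (x.1 = y.1 ∨ G.Adj x.1 y.1) ∧ (x.2 = y.2 ∨ H.Adj x.2 y.2)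
  symm := ⟨fun _ _ h => ⟨h.1.symm, h.2.1.imp Eq.symm (fun h' => h'.symm), h.2.2.imp Eq.symm (fun h' => h'.symm)⟩⟩
  loopless := ⟨fun _ h => h.1 rfl⟩

/-- The `n`-fold strong power of a simple graph. -/
def strongPow {α : Type*} (G : SimpleGraph α) (n : ℕ) : SimpleGraph (Fin n → α) where
  Adj u v := u ≠ v ∧ ∀ i, u i = v i ∨ G.Adj (u i) (v i)
  symm := ⟨fun _ _ h => ⟨h.1.symm, fun i => (h.2 i).imp Eq.symm (fun h' => h'.symm)⟩⟩
  loopless := ⟨fun _ h => h.1 rfl⟩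

/-- The strong product of a family of simple graphs. -/
def strongProdFamily {ι : Type*} {α : ι → Type*} (G : ∀ i, SimpleGraph (α i)) :
    SimpleGraph (∀ i, α i) where
  Adj u v := u ≠ v ∧ ∀ i, u i = v i ∨ (G i).Adj (u i) (v i)
  symm := ⟨fun _ _ h => ⟨h.1.symm, fun i => (h.2 i).imp Eq.symm (fun h' => h'.symm)⟩⟩
  loopless := ⟨fun _ h => h.1 rfl⟩

/-- A finset of vertices is independent if its elements are pairwise non-adjacent. -/
def IsIndepFinset {α : Type*} (G : SimpleGraph α) (s : Finset α) : Prop :=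
  ∀ u ∈ s, ∀ v ∈ s, u ≠ v → ¬ G.Adj u v

/-- The independence number of a graph: the greatest cardinality of an independent set. -/
noncomputable def indepNum {α : Type*} (G : SimpleGraph α) : ℕ :=
  sSup {n : ℕ | ∃ s : Finset α, IsIndepFinset G s ∧ s.card = n}

/-- A cohomomorphism from `G` to `H`: a map sending distinct non-adjacent vertices
to distinct non-adjacent vertices. -/
def IsCohom {α β : Type*} (G : SimpleGraph α) (H : SimpleGraph β) (f : α → β) : Prop :=
  ∀ u v, u ≠ v → ¬ G.Adj u v → f u ≠ f v ∧ ¬ H.Adj (f u) (f v)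

/-- Disjoint union of two simple graphs. -/
def disjUnion {α β : Type*} (G : SimpleGraph α) (H : SimpleGraph β) :
    SimpleGraph (α ⊕ β) where
  Adj x y := (∃ a b, x = Sum.inl a ∧ y = Sum.inl b ∧ G.Adj a b) ∨
             (∃ a b, x = Sum.inr a ∧ y = Sum.inr b ∧ H.Adj a b)
  symm := by
    constructor
    rintro x y (⟨a, b, rfl, rfl, h⟩ | ⟨a, b, rfl, rfl, h⟩)
    · exact Or.inl ⟨b, a, rfl, rfl, h.symm⟩
    · exact Or.inr ⟨b, a, rfl, rfl, h.symm⟩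
  loopless := by
    constructor
    rintro x (⟨a, b, rfl, heq, h⟩ | ⟨a, b, rfl, heq, h⟩) <;>
      · injection heq with h'
        subst h'
        exact h.ne rfl

/-- The open circle graph `E_r^o` on the circle `ℝ/ℤ`: distinct points are adjacent
iff their distance is strictly less than `1/r`. -/
noncomputable def openCircleGraph (r : ℝ) : SimpleGraph (AddCircle (1 : ℝ)) where
  Adj x y := x ≠ y ∧ dist x y < 1 / r
  symm := ⟨fun x y h => ⟨h.1.symm, (dist_comm y x).trans_lt h.2⟩⟩
  loopless := ⟨fun _ h => h.1 rfl⟩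

/-- The closed circle graph `E_r^c` on the circle `ℝ/ℤ`: distinct points are adjacent
iff their distance is at most `1/r`. -/
noncomputable def closedCircleGraph (r : ℝ) : SimpleGraph (AddCircle (1 : ℝ)) where
  Adj x y := x ≠ y ∧ dist x y ≤ 1 / r
  symm := ⟨fun x y h => ⟨h.1.symm, (dist_comm y x).trans_le h.2⟩⟩
  loopless := ⟨fun _ h => h.1 rfl⟩

/-- The Shannon capacity `Θ(G) = sup_{n ≥ 1} α(G^{⊠n})^{1/n}`. -/
noncomputable def shannonCapacity {α : Type*} (G : SimpleGraph α) : ℝ :=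
  ⨆ n : ℕ+, (_root_.indepNum (strongPow G n) : ℝ) ^ (((n : ℕ) : ℝ)⁻¹)


noncomputable section CircleAux

local notation "𝕋" => AddCircle (1:ℝ)

lemma tnorm_eq (x : ℝ) : ‖(x : 𝕋)‖ = |x - round x| := by
  simpa using AddCircle.norm_eq (p := (1:ℝ)) (x := x)

lemma tdist_eq (a b : ℝ) : dist (a : 𝕋) (b : 𝕋) = |(b - a) - round (b - a)| := by
  rw [dist_eq_norm, norm_sub_rev]
  have : (b : 𝕋) - (a : 𝕋) = ((b - a : ℝ) : 𝕋) := (AddCircle.coe_sub 1 b a).symm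
  rw [this, tnorm_eq]

lemma abs_sub_round_le' (x : ℝ) (m : ℤ) : |x - round x| ≤ |x - m| := by
  rcases eq_or_ne m (round x) with rfl | h
  · exact le_refl _
  · have h1 : |x - round x| ≤ 1/2 := abs_sub_round x
    have h2 : (1:ℝ) ≤ |(m : ℝ) - round x| := by
      have h3 : (1:ℤ) ≤ |m - round x| := Int.one_le_abs (sub_ne_zero.mpr h)
      calc (1:ℝ) = ((1:ℤ):ℝ) := by norm_num
        _ ≤ ((|m - round x| : ℤ) : ℝ) := by exact_mod_cast h3
        _ = |(m:ℝ) - round x| := by push_cast; ring_nf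
    have h3 : |(m:ℝ) - round x| ≤ |x - m| + |x - round x| := by
      calc |(m:ℝ) - round x| = |(x - (round x:ℝ)) - (x - m)| := by ring_nf
      _ ≤ |x - (round x:ℝ)| + |x - m| := abs_sub _ _
      _ = |x - m| + |x - round x| := by ring
    linarith

lemma tdist_le (a b : ℝ) : dist (a : 𝕋) (b : 𝕋) ≤ |b - a| := by
  rw [tdist_eq]
  simpa using abs_sub_round_le' (b - a) 0

lemma tdist_le' (a b : ℝ) (h : |b - a| ≤ 1) : dist (a : 𝕋) (b : 𝕋) ≤ 1 - |b - a| := by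
  rw [tdist_eq]
  rcases le_or_gt 0 (b - a) with hs | hs
  · have := abs_sub_round_le' (b - a) 1
    rw [abs_of_nonneg hs] at *
    calc |b - a - round (b-a)| ≤ |b - a - (1:ℤ)| := this
      _ = 1 - (b - a) := by rw [abs_of_nonpos (by push_cast; linarith)]; push_cast; ring
  · have := abs_sub_round_le' (b - a) (-1)
    rw [abs_of_neg hs] at *
    calc |b - a - round (b-a)| ≤ |b - a - ((-1:ℤ):ℝ)| := this
      _ = 1 - -(b - a) := by rw [abs_of_nonneg (by push_cast; linarith)]; push_cast; ring

lemma tdist_ge {t : ℝ} (a v : ℝ) (h1 : t ≤ v) (h2 : v ≤ 1 - t) (ht : 0 ≤ t) :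
    t ≤ dist (a : 𝕋) ((a + v : ℝ) : 𝕋) := by
  rw [tdist_eq]
  have hv : a + v - a = v := by ring
  rw [hv]
  rcases le_or_gt (round v) 0 with hr | hr
  · have : (round v : ℝ) ≤ 0 := by exact_mod_cast hr
    rw [abs_of_nonneg (by linarith)]
    linarith
  · have h1' : (1:ℤ) ≤ round v := hr
    have : (1:ℝ) ≤ (round v : ℝ) := by exact_mod_cast h1'
    rw [abs_of_nonpos (by linarith)]
    linarith

lemma tlift (z : 𝕋) : ∃ x : ℝ, (x : 𝕋) = z ∧ |x| = ‖z‖ := by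
  obtain ⟨y, rfl⟩ := QuotientAddGroup.mk_surjective z
  refine ⟨y - round y, ?_, by rw [tnorm_eq]⟩
  have h0 : (((round y : ℝ)) : 𝕋) = 0 := by
    rw [AddCircle.coe_eq_zero_iff]
    exact ⟨round y, by simp⟩
  have : ((y - round y : ℝ) : 𝕋) = ((y : ℝ) : 𝕋) - (((round y : ℝ)) : 𝕋) :=
    AddCircle.coe_sub 1 y (round y : ℝ)
  rw [this, h0, sub_zero]

lemma tcoe_int (x : ℝ) (h : (x : 𝕋) = 0) : ∃ k : ℤ, x = k := by
  rw [AddCircle.coe_eq_zero_iff] at h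
  obtain ⟨k, hk⟩ := h
  exact ⟨k, by simpa using hk.symm⟩

set_option maxHeartbeats 1000000 in
lemma tcoe_add_one (x : ℝ) : ((x + 1 : ℝ) : 𝕋) = (x : 𝕋) := by
  have h := AddCircle.coe_add (p := (1:ℝ)) x 1
  rw [h, AddCircle.coe_period, add_zero]

lemma KGL {t : ℝ} {n : ℕ} (hn : 2 ≤ n) (h1 : 1 < (n+1)*t)
    (v : Fin (n+1) → 𝕋)
    (hp : ∀ i j : Fin (n+1), i ≠ j → ¬(i = 0 ∧ j = Fin.last n) →
      ¬(j = 0 ∧ i = Fin.last n) → t < dist (v i) (v j)) :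
    dist (v 0) (v (Fin.last n)) < 1 - n*t := by
  classical
  -- representatives in [0,1)
  have hrep : ∀ i, ∃ b : ℝ, b ∈ Set.Ico (0:ℝ) 1 ∧ (b : 𝕋) = v i := by
    intro i
    obtain ⟨b, hb, hb2⟩ := AddCircle.eq_coe_Ico (v i)
    exact ⟨b, by simpa using hb, hb2⟩
  choose u hu hcoe using hrep
  set σ := Tuple.sort u with hσ
  have hmono : Monotone (u ∘ σ) := Tuple.monotone_sort u
  have hinj : Function.Injective σ := σ.injective
  set idx : ℕ → Fin (n+1) := fun k => ⟨min k n, by omega⟩ with hidx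
  set Y : ℕ → ℝ := fun k => u (σ (idx k)) with hY
  have hidxk : ∀ k, k ≤ n → (idx k : ℕ) = k := by intro k hk; simp [hidx, Nat.min_eq_left hk]
  have hYmono : ∀ k l, k ≤ l → Y k ≤ Y l := by
    intro k l hkl
    exact hmono (by simp only [hidx, Fin.mk_le_mk]; omega)
  -- distances vs representative differences
  have hdle : ∀ a b : Fin (n+1), dist (v a) (v b) ≤ |u b - u a| := by
    intro a b; rw [← hcoe a, ← hcoe b]; exact tdist_le _ _
  have hdle' : ∀ a b : Fin (n+1), dist (v a) (v b) ≤ 1 - |u b - u a| := by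
    intro a b; rw [← hcoe a, ← hcoe b]
    refine tdist_le' _ _ ?_
    have h1 := (hu a).1; have h2 := (hu a).2; have h3 := (hu b).1; have h4 := (hu b).2
    rw [abs_le]; constructor <;> linarith
  -- gaps
  set g : ℕ → ℝ := fun k => Y (k+1) - Y k with hg
  have hsum : ∀ m, m ≤ n → ∑ k ∈ Finset.range m, g k = Y m - Y 0 := by
    intro m _; exact Finset.sum_range_sub Y m
  -- exceptional predicates
  set exc : ℕ → Prop := fun k =>
    (σ (idx k) = 0 ∧ σ (idx (k+1)) = Fin.last n) ∨
    (σ (idx k) = Fin.last n ∧ σ (idx (k+1)) = 0) with hexc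
  set wexc : Prop :=
    (σ (idx n) = 0 ∧ σ (idx 0) = Fin.last n) ∨
    (σ (idx n) = Fin.last n ∧ σ (idx 0) = 0) with hwexc
  have hlast0 : (0 : Fin (n+1)) ≠ Fin.last n := by
    simp only [ne_eq, Fin.ext_iff, Fin.val_last, Fin.val_zero]; omega
  -- non-exceptional linear pairs give gap bounds
  have hgap : ∀ k, k < n → ¬ exc k → t < g k := by
    intro k hk hke
    have hne : σ (idx k) ≠ σ (idx (k+1)) := by
      intro h; apply hinj at h
      simp only [hidx, Fin.mk.injEq] at h; omega
    have := hp (σ (idx k)) (σ (idx (k+1))) hne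
      (fun h => hke (Or.inl h)) (fun h => hke (Or.inr ⟨h.2, h.1⟩))
    calc t < dist (v (σ (idx k))) (v (σ (idx (k+1)))) := this
      _ ≤ |u (σ (idx (k+1))) - u (σ (idx k))| := hdle _ _
      _ = Y (k+1) - Y k := by
          rw [abs_of_nonneg (by have := hYmono k (k+1) (by omega); simp [hY]; linarith)]
  have hwrapd : dist (v (σ (idx n))) (v (σ (idx 0))) ≤ 1 - (Y n - Y 0) := by
    have h := hdle' (σ (idx n)) (σ (idx 0))
    have : |u (σ (idx 0)) - u (σ (idx n))| = Y n - Y 0 := by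
      rw [abs_sub_comm, abs_of_nonneg (by have := hYmono 0 n (by omega); linarith)]
    rw [this] at h; exact h
  have hwgap : ¬ wexc → t < 1 - (Y n - Y 0) := by
    intro hw
    have hne : σ (idx n) ≠ σ (idx 0) := by
      intro h; apply hinj at h
      simp only [hidx, Fin.mk.injEq] at h; omega
    have := hp (σ (idx n)) (σ (idx 0)) hne
      (fun h => hw (Or.inl h)) (fun h => hw (Or.inr ⟨h.2, h.1⟩))
    linarith [hwrapd, this]
  by_cases hE : ∃ e, e < n ∧ exc e
  · obtain ⟨e, he, hexce⟩ := hE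
    -- uniqueness: other linear positions non-exceptional
    have huniq : ∀ k, k < n → k ≠ e → ¬ exc k := by
      intro k hk hke hexck
      have hinj2 : ∀ a b : ℕ, a ≤ n → b ≤ n → σ (idx a) = σ (idx b) → a = b := by
        intro a b ha hb h; apply hinj at h
        simp only [hidx, Fin.mk.injEq] at h; omega
      rcases hexce with ⟨h1e, h2e⟩ | ⟨h1e, h2e⟩ <;> rcases hexck with ⟨h1k, h2k⟩ | ⟨h1k, h2k⟩
      · exact hke (hinj2 k e (by omega) (by omega) (h1k.trans h1e.symm))
      · have := hinj2 k (e+1) (by omega) (by omega) (h1k.trans h2e.symm)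
        have := hinj2 (k+1) e (by omega) (by omega) (h2k.trans h1e.symm)
        omega
      · have := hinj2 k (e+1) (by omega) (by omega) (h1k.trans h2e.symm)
        have := hinj2 (k+1) e (by omega) (by omega) (h2k.trans h1e.symm)
        omega
      · exact hke (hinj2 k e (by omega) (by omega) (h1k.trans h1e.symm))
    have hwne : ¬ wexc := by
      intro hw
      have hinj2 : ∀ a b : ℕ, a ≤ n → b ≤ n → σ (idx a) = σ (idx b) → a = b := by
        intro a b ha hb h; apply hinj at h
        simp only [hidx, Fin.mk.injEq] at h; omega
      rcases hexce with ⟨h1e, h2e⟩ | ⟨h1e, h2e⟩ <;> rcases hw with ⟨h1w, h2w⟩ | ⟨h1w, h2w⟩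
      · have := hinj2 n e (by omega) (by omega) (h1w.trans h1e.symm)
        omega
      · have := hinj2 n (e+1) (by omega) (by omega) (h1w.trans h2e.symm)
        have := hinj2 0 e (by omega) (by omega) (h2w.trans h1e.symm)
        omega
      · have := hinj2 n (e+1) (by omega) (by omega) (h1w.trans h2e.symm)
        have := hinj2 0 e (by omega) (by omega) (h2w.trans h1e.symm)
        omega
      · have := hinj2 n e (by omega) (by omega) (h1w.trans h1e.symm)
        omega
    -- sum bound
    have hsub : ((n:ℝ) - 1) * t ≤ ∑ k ∈ (Finset.range n).erase e, g k := by
      have hcard : ((Finset.range n).erase e).card = n - 1 := by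
        rw [Finset.card_erase_of_mem (Finset.mem_range.mpr he), Finset.card_range]
      have := Finset.card_nsmul_le_sum ((Finset.range n).erase e) g t ?_
      · rw [hcard] at this
        have : ((n-1 : ℕ) : ℝ) * t ≤ ∑ k ∈ (Finset.range n).erase e, g k := by
          simpa [nsmul_eq_mul] using this
        calc ((n:ℝ) - 1) * t = ((n-1:ℕ):ℝ) * t := by
              have : ((n-1:ℕ):ℝ) = (n:ℝ) - 1 := by
                have : (1:ℕ) ≤ n := by omega
                push_cast [Nat.cast_sub this]; ring
              rw [this]
          _ ≤ _ := this
      · intro k hk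
        have hk1 := Finset.mem_erase.mp hk
        have hk2 := Finset.mem_range.mp hk1.2
        exact le_of_lt (hgap k hk2 (huniq k hk2 hk1.1))
    have htot : ∑ k ∈ Finset.range n, g k = Y n - Y 0 := hsum n le_rfl
    have hYlt : Y n - Y 0 < 1 - t := by linarith [hwgap hwne]
    have hge : g e = (Y n - Y 0) - ∑ k ∈ (Finset.range n).erase e, g k := by
      rw [← htot, ← Finset.add_sum_erase _ g (Finset.mem_range.mpr he)]; ring
    have hgelt : g e < 1 - n * t := by
      rw [hge]; push_cast; nlinarith [hsub, hYlt]
    -- conclusion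
    have hYe : Y (e+1) - Y e = g e := rfl
    rcases hexce with ⟨h1e, h2e⟩ | ⟨h1e, h2e⟩
    · calc dist (v 0) (v (Fin.last n)) = dist (v (σ (idx e))) (v (σ (idx (e+1)))) := by
            rw [h1e, h2e]
        _ ≤ |u (σ (idx (e+1))) - u (σ (idx e))| := hdle _ _
        _ = g e := by
            rw [abs_of_nonneg (by have := hYmono e (e+1) (by omega); simp [hY]; linarith)]
        _ < 1 - n*t := hgelt
    · calc dist (v 0) (v (Fin.last n)) = dist (v (σ (idx (e+1)))) (v (σ (idx e))) := by
            rw [h1e, h2e]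
        _ = dist (v (σ (idx e))) (v (σ (idx (e+1)))) := _root_.dist_comm _ _
        _ ≤ |u (σ (idx (e+1))) - u (σ (idx e))| := hdle _ _
        _ = g e := by
            rw [abs_of_nonneg (by have := hYmono e (e+1) (by omega); simp [hY]; linarith)]
        _ < 1 - n*t := hgelt
  · push_neg at hE
    have hallgap : ∀ k ∈ Finset.range n, t < g k := by
      intro k hk
      have hk' := Finset.mem_range.mp hk
      exact hgap k hk' (hE k hk')
    have hsumgt : (n:ℝ) * t < Y n - Y 0 := by
      have h0 : ∑ _k ∈ Finset.range n, t < ∑ k ∈ Finset.range n, g k :=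
        Finset.sum_lt_sum_of_nonempty (by simp; omega) hallgap
      rw [hsum n le_rfl] at h0
      simpa [Finset.sum_const, Finset.card_range, nsmul_eq_mul] using h0
    by_cases hw : wexc
    · have hconc : dist (v 0) (v (Fin.last n)) ≤ 1 - (Y n - Y 0) := by
        rcases hw with ⟨h1w, h2w⟩ | ⟨h1w, h2w⟩
        · rw [← h1w, ← h2w]; exact hwrapd
        · rw [← h1w, ← h2w, _root_.dist_comm]; exact hwrapd
      linarith
    · exfalso
      have := hwgap hw
      push_cast at h1
      linarith


/-- Configuration of parameters. -/
structure Cfg (t : ℝ) (n : ℕ) : Prop where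
  irr : Irrational t
  ht0 : 0 < t
  ht2 : t < 1/2
  hn : 2 ≤ n
  hnt : (n:ℝ) * t < 1
  hnt1 : 1 < ((n:ℝ)+1) * t

namespace Cfg

variable {t : ℝ} {n : ℕ}

lemma ht1 (c : Cfg t n) : 1/((n:ℝ)+1) < t := by
  have hn1 : (0:ℝ) < (n:ℝ)+1 := by positivity
  rw [div_lt_iff₀ hn1]
  linarith [c.hnt1]

lemma he0 (c : Cfg t n) : 0 < 1 - (n:ℝ)*t := by linarith [c.hnt]

lemma helt (c : Cfg t n) : 1 - (n:ℝ)*t < t := by linarith [c.hnt1]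

lemma he3 (c : Cfg t n) : 1 - (n:ℝ)*t < 1/3 := by
  have h1 := c.ht1
  have hn : (2:ℝ) ≤ (n:ℝ) := by exact_mod_cast c.hn
  have hn1 : (0:ℝ) < (n:ℝ)+1 := by positivity
  have : (n:ℝ)/((n:ℝ)+1) < (n:ℝ)*t := by
    rw [div_lt_iff₀ hn1] at *
    nlinarith
  have h2 : (2:ℝ)/3 ≤ (n:ℝ)/((n:ℝ)+1) := by
    rw [div_le_div_iff₀ (by norm_num) hn1]
    linarith
  linarith

lemma hte1 (c : Cfg t n) : t + (1 - (n:ℝ)*t) ≤ 1 - t := by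
  have hn : (2:ℝ) ≤ (n:ℝ) := by exact_mod_cast c.hn
  nlinarith [c.ht0]

lemma ht2e (c : Cfg t n) : t + 2*(1 - (n:ℝ)*t) < 1 := by
  have hn : (2:ℝ) ≤ (n:ℝ) := by exact_mod_cast c.hn
  have h1 := c.ht1
  have hn1 : (0:ℝ) < (n:ℝ)+1 := by positivity
  rw [div_lt_iff₀ hn1] at h1
  nlinarith

end Cfg

/-- The cohomomorphism hypothesis, in coordinates. -/
def CP (t : ℝ) (f : 𝕋 → 𝕋) : Prop :=
  ∀ a b : ℝ, t ≤ dist (a : 𝕋) (b : 𝕋) → t < dist (f ↑a) (f ↑b)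

section Main

variable {t : ℝ} {n : ℕ} {f : 𝕋 → 𝕋}

/-- Uniform coarse continuity. -/
lemma UCC (c : Cfg t n) (hf : CP t f) :
    ∀ a d : ℝ, 0 ≤ d → d ≤ 1 - n*t → dist (f ↑a) (f ↑(a + d)) ≤ 1 - n*t := by
  intro a d hd0 hd
  rcases eq_or_lt_of_le hd0 with rfl | hd0'
  · simp [le_of_lt (c.he0)]
  obtain ⟨ε, hε⟩ : ∃ ε : ℝ, ε = 1 - (n:ℝ)*t := ⟨_, rfl⟩
  rw [← hε] at hd
  obtain ⟨s, hs⟩ : ∃ s : ℝ, s = ε - d := ⟨_, rfl⟩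
  have hs0 : 0 ≤ s := by rw [hs]; linarith
  have hsε : s < ε := by rw [hs]; linarith
  have hn0 : (0:ℝ) < n := by
    have : (2:ℝ) ≤ (n:ℝ) := by exact_mod_cast c.hn
    linarith
  obtain ⟨h', hh'⟩ : ∃ h' : ℝ, h' = t + s/n := ⟨_, rfl⟩
  have hh't : t ≤ h' := by
    have : 0 ≤ s/n := by positivity
    rw [hh']; linarith
  obtain ⟨x, hx⟩ : ∃ x : ℝ, x = a + d := ⟨_, rfl⟩
  set v : Fin (n+1) → 𝕋 := fun i => f ↑(x + i*h') with hv
  have hkbound : ∀ k : ℕ, 1 ≤ k → k ≤ n - 1 → t ≤ (k:ℝ)*h' ∧ (k:ℝ)*h' ≤ 1 - t := by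
    intro k hk1 hkn
    have hkr : (k:ℝ) ≤ (n:ℝ) - 1 := by
      have : (k:ℝ) ≤ ((n-1:ℕ):ℝ) := by exact_mod_cast hkn
      have h2 : ((n-1:ℕ):ℝ) = (n:ℝ) - 1 := by
        have : (1:ℕ) ≤ n := by omega
        push_cast [Nat.cast_sub this]; ring
      linarith
    have hk1r : (1:ℝ) ≤ (k:ℝ) := by exact_mod_cast hk1
    constructor
    · calc t = 1 * t := (one_mul t).symm
        _ ≤ (k:ℝ) * h' := by nlinarith [c.ht0]
    · have h1 : (k:ℝ)*h' ≤ ((n:ℝ)-1)*h' := by nlinarith [hh't, c.ht0]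
      have h2 : ((n:ℝ)-1)*h' = ((n:ℝ)-1)*t + ((n:ℝ)-1)*(s/n) := by rw [hh']; ring
      have h3 : ((n:ℝ)-1)*(s/n) ≤ s := by
        rw [mul_div_assoc']
        rw [div_le_iff₀ hn0]
        nlinarith
      have h4 : s ≤ ε := le_of_lt hsε
      have h5 : ((n:ℝ)-1)*t + ε = 1 - t := by rw [hε]; ring
      linarith [h1, h2, h3, h4, h5]
  have key : ∀ i j : Fin (n+1), (i:ℕ) < (j:ℕ) → ¬(i = 0 ∧ j = Fin.last n) →
      t < dist (v i) (v j) := by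
    intro i j hij hexc
    set k : ℕ := (j:ℕ) - (i:ℕ) with hk
    have hk1 : 1 ≤ k := by omega
    have hkn : k ≤ n - 1 := by
      by_contra hcon
      have hkeq : k = n := by have := j.isLt; omega
      have hi0 : (i:ℕ) = 0 := by have := j.isLt; omega
      have hjn : (j:ℕ) = n := by have := j.isLt; omega
      exact hexc ⟨Fin.ext (by simpa using hi0), Fin.ext (by simpa using hjn)⟩
    obtain ⟨hb1, hb2⟩ := hkbound k hk1 hkn
    have harg : x + (j:ℕ)*h' = (x + (i:ℕ)*h') + (k:ℝ)*h' := by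
      have : ((j:ℕ):ℝ) = ((i:ℕ):ℝ) + ((k:ℕ):ℝ) := by
        push_cast [hk]
        have : (i:ℕ) ≤ (j:ℕ) := le_of_lt hij
        push_cast [Nat.cast_sub this]
        ring
      rw [this]; ring
    have hdom : t ≤ dist ((x + (i:ℕ)*h' : ℝ) : 𝕋) ((x + (j:ℕ)*h' : ℝ) : 𝕋) := by
      rw [harg]
      exact tdist_ge _ _ hb1 hb2 (le_of_lt c.ht0)
    exact hf _ _ hdom
  have hp : ∀ i j : Fin (n+1), i ≠ j → ¬(i = 0 ∧ j = Fin.last n) →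
      ¬(j = 0 ∧ i = Fin.last n) → t < dist (v i) (v j) := by
    intro i j hij h1 h2
    rcases lt_or_gt_of_ne (fun h : (i:ℕ) = (j:ℕ) => hij (Fin.ext h)) with h | h
    · exact key i j h h1
    · rw [_root_.dist_comm]; exact key j i h h2
  have hKGL := KGL c.hn c.hnt1 v hp
  have hv0 : v 0 = f ↑(a + d) := by
    simp [hv, hx]
  have hvlast : v (Fin.last n) = f ↑a := by
    have : x + (Fin.last n : ℕ)*h' = a + 1 := by
      simp only [Fin.val_last]
      have h1 : (n:ℝ)*h' = (n:ℝ)*t + s := by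
        rw [hh', mul_add, mul_div_assoc', mul_div_cancel_left₀ s (ne_of_gt hn0)]
      have : x + (n:ℝ)*h' = a + d + ((n:ℝ)*t + s) := by rw [h1, hx]
      rw [this]
      simp only [hs, hε]
      ring
    rw [hv]
    simp only []
    rw [this, tcoe_add_one]
  rw [_root_.dist_comm]
  rw [← hv0, ← hvlast]
  exact le_of_lt hKGL

lemma UCC' (c : Cfg t n) (hf : CP t f) :
    ∀ a b : ℝ, |b - a| ≤ 1 - n*t → dist (f ↑a) (f ↑b) ≤ 1 - n*t := by
  intro a b h
  rcases le_or_gt a b with hab | hab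
  · have := UCC c hf a (b - a) (by linarith) (by rw [abs_of_nonneg (by linarith)] at h; linarith)
    simpa using this
  · rw [_root_.dist_comm]
    have := UCC c hf b (a - b) (by linarith) (by rw [abs_of_neg (by linarith)] at h; linarith)
    simpa using this


/-- Signed representative of `f ↑b - f ↑a`. -/
noncomputable def wrep (f : 𝕋 → 𝕋) (a b : ℝ) : ℝ := (tlift (f ↑b - f ↑a)).choose

lemma wrep_coe (f : 𝕋 → 𝕋) (a b : ℝ) : ((wrep f a b : ℝ) : 𝕋) = f ↑b - f ↑a :=
  (tlift (f ↑b - f ↑a)).choose_spec.1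

lemma wrep_abs (f : 𝕋 → 𝕋) (a b : ℝ) : |wrep f a b| = dist (f ↑a) (f ↑b) := by
  have h := (tlift (f ↑b - f ↑a)).choose_spec.2
  rw [wrep] at *
  rw [h, ← dist_eq_norm, _root_.dist_comm]

lemma wrep_small (c : Cfg t n) (hf : CP t f) {a b : ℝ} (h : |b - a| ≤ 1 - n*t) :
    |wrep f a b| ≤ 1 - n*t := by
  rw [wrep_abs]
  exact UCC' c hf a b h

lemma wrep_unique' (c : Cfg t n) {f : 𝕋 → 𝕋} {w' a b : ℝ}
    (hcoe : ((w' : ℝ) : 𝕋) = f ↑b - f ↑a) (hlt : |w' - wrep f a b| < 1) :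
    w' = wrep f a b := by
  have h1 : ((w' - wrep f a b : ℝ) : 𝕋) = 0 := by
    rw [AddCircle.coe_sub 1 w' (wrep f a b), hcoe, wrep_coe]
    simp
  obtain ⟨k, hk⟩ := tcoe_int _ h1
  have : |(k:ℝ)| < 1 := by rw [← hk]; exact hlt
  have hk0 : k = 0 := by
    by_contra hne
    have : (1:ℝ) ≤ |(k:ℝ)| := by exact_mod_cast Int.one_le_abs hne
    linarith
  have : w' - wrep f a b = 0 := by rw [hk, hk0]; simp
  linarith

lemma wrep_cocycle (c : Cfg t n) (hf : CP t f) {a b d : ℝ} (hab : a ≤ b) (hbd : b ≤ d)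
    (h : d - a ≤ 1 - n*t) : wrep f a b + wrep f b d = wrep f a d := by
  have he0 := c.he0
  have hab' : |b - a| ≤ 1 - n*t := by rw [abs_of_nonneg (by linarith)]; linarith
  have hbd' : |d - b| ≤ 1 - n*t := by rw [abs_of_nonneg (by linarith)]; linarith
  have had' : |d - a| ≤ 1 - n*t := by rw [abs_of_nonneg (by linarith)]; linarith
  apply wrep_unique' c
  · rw [AddCircle.coe_add 1 (wrep f a b) (wrep f b d), wrep_coe, wrep_coe]
    abel
  · have h1 := wrep_small c hf hab'
    have h2 := wrep_small c hf hbd'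
    have h3 := wrep_small c hf had'
    have he3 := c.he3
    have := abs_add_le (wrep f a b + wrep f b d) (-(wrep f a d))
    rw [abs_neg] at this
    calc |wrep f a b + wrep f b d - wrep f a d|
        = |(wrep f a b + wrep f b d) + -(wrep f a d)| := by ring_nf
      _ ≤ |wrep f a b + wrep f b d| + |wrep f a d| := this
      _ ≤ (|wrep f a b| + |wrep f b d|) + |wrep f a d| := by
          linarith [abs_add_le (wrep f a b) (wrep f b d)]
      _ < 1 := by linarith

lemma wrep_shift (c : Cfg t n) (hf : CP t f) {a b : ℝ} (h : |b - a| ≤ 1 - n*t) :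
    wrep f (a+1) (b+1) = wrep f a b := by
  symm
  apply wrep_unique' c
  · rw [wrep_coe, tcoe_add_one, tcoe_add_one]
  · have h1 := wrep_small c hf h
    have h2 : |wrep f (a+1) (b+1)| ≤ 1 - n*t := by
      apply wrep_small c hf
      have : (b+1) - (a+1) = b - a := by ring
      rw [this]; exact h
    have he3 := c.he3
    calc |wrep f a b - wrep f (a+1) (b+1)| ≤ |wrep f a b| + |wrep f (a+1) (b+1)| :=
          abs_sub _ _
      _ < 1 := by linarith

/-- The coarse lift of `f` along the grid of mesh `ε`. -/
noncomputable def Fl (f : 𝕋 → 𝕋) (ε : ℝ) (x : ℝ) : ℝ :=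
  (∑ k ∈ Finset.range ⌊x/ε⌋₊, wrep f (k*ε) ((k+1)*ε)) + wrep f ((⌊x/ε⌋₊:ℝ)*ε) x

lemma Fl_step (c : Cfg t n) (hf : CP t f) {x y : ℝ} (hx : 0 ≤ x) (hxy : x ≤ y)
    (h : y - x ≤ 1 - n*t) :
    Fl f (1 - n*t) y - Fl f (1 - n*t) x = wrep f x y := by
  have he0 := c.he0
  have hy : 0 ≤ y := le_trans hx hxy
  set ε := 1 - (n:ℝ)*t with hε
  set K : ℕ := ⌊x/ε⌋₊ with hK
  have hKle : (K:ℝ)*ε ≤ x := by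
    have h1 : (K:ℝ) ≤ x/ε := Nat.floor_le (by positivity)
    calc (K:ℝ)*ε ≤ (x/ε)*ε := by nlinarith
      _ = x := by field_simp
  have hKlt : x < ((K:ℝ)+1)*ε := by
    have h1 : x/ε < (K:ℝ)+1 := Nat.lt_floor_add_one _
    calc x = (x/ε)*ε := by field_simp
      _ < ((K:ℝ)+1)*ε := by nlinarith
  have hdiv : x/ε ≤ y/ε := by gcongr
  have hdiv2 : y/ε ≤ x/ε + 1 := by
    have : y ≤ x + ε := by linarith
    calc y/ε ≤ (x + ε)/ε := by gcongr
      _ = x/ε + 1 := by field_simp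
  have hKy : ⌊y/ε⌋₊ = K ∨ ⌊y/ε⌋₊ = K + 1 := by
    have h1 : K ≤ ⌊y/ε⌋₊ := Nat.floor_le_floor hdiv
    have h2 : ⌊y/ε⌋₊ ≤ K + 1 := by
      calc ⌊y/ε⌋₊ ≤ ⌊x/ε + 1⌋₊ := Nat.floor_le_floor hdiv2
        _ = K + 1 := by
            rw [Nat.floor_add_one (by positivity)]
    omega
  rcases hKy with hcase | hcase
  · have hyK : y < ((K:ℝ)+1)*ε := by
      have h1 : y/ε < (K:ℝ)+1 := by
        have := Nat.lt_floor_add_one (y/ε)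
        rw [hcase] at this
        exact_mod_cast this
      calc y = (y/ε)*ε := by field_simp
        _ < ((K:ℝ)+1)*ε := by nlinarith
    have hco := wrep_cocycle c hf hKle hxy (by nlinarith)
    rw [Fl, Fl, hcase]
    linarith [hco]
  · have hKy2 : ((K:ℝ)+1)*ε ≤ y := by
      have h1 : ((K:ℝ)+1) ≤ y/ε := by
        have := Nat.floor_le (R := ℝ) (a := y/ε) (by positivity)
        rw [hcase] at this
        push_cast at this
        linarith
      calc ((K:ℝ)+1)*ε ≤ (y/ε)*ε := by nlinarith
        _ = y := by field_simp
    have hc1 := wrep_cocycle c hf hKle (le_of_lt hKlt)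
      (by have : ((K:ℝ)+1)*ε - (K:ℝ)*ε = ε := by ring
          rw [this])
    have hc2 := wrep_cocycle c hf (le_of_lt hKlt) hKy2 (by nlinarith)
    rw [Fl, Fl, hcase, Finset.sum_range_succ]
    push_cast
    linarith [hc1, hc2]

lemma Fl_chain (c : Cfg t n) (hf : CP t f) {x s : ℝ} (hx : 0 ≤ x) (hs0 : 0 ≤ s)
    (hs : s ≤ 1 - n*t) (m : ℕ) :
    Fl f (1 - n*t) (x + m*s) - Fl f (1 - n*t) x
      = ∑ i ∈ Finset.range m, wrep f (x + i*s) (x + (i+1)*s) := by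
  induction m with
  | zero => simp
  | succ m ih =>
      rw [Finset.sum_range_succ, ← ih]
      have hstep : Fl f (1 - n*t) (x + (m+1)*s) - Fl f (1 - n*t) (x + m*s)
          = wrep f (x + m*s) (x + (m+1)*s) := by
        apply Fl_step c hf (by positivity) (by nlinarith) (by push_cast; ring_nf; nlinarith)
      push_cast
      push_cast at hstep
      linarith [hstep]

lemma Fl_speed (c : Cfg t n) (hf : CP t f) {x y : ℝ} (hx : 0 ≤ x) (hxy : x ≤ y) :
    |Fl f (1 - n*t) y - Fl f (1 - n*t) x| ≤ (y - x) + (1 - n*t) := by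
  have he0 := c.he0
  rcases eq_or_lt_of_le hxy with rfl | hlt
  · simp; linarith
  set m : ℕ := ⌈(y - x)/(1 - n*t)⌉₊ with hm
  have hm1 : 1 ≤ m := by
    rw [hm]
    exact Nat.one_le_ceil_iff.mpr (div_pos (by linarith) he0)
  have hmr : (0:ℝ) < m := by exact_mod_cast hm1
  set s : ℝ := (y - x)/m with hs
  have hs0 : 0 ≤ s := by rw [hs]; exact div_nonneg (by linarith) (le_of_lt hmr)
  have hsle : s ≤ 1 - n*t := by
    rw [hs, div_le_iff₀ hmr]
    have h1 : (y - x)/(1 - n*t) ≤ m := Nat.le_ceil _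
    calc y - x = ((y-x)/(1 - n*t)) * (1 - n*t) := by field_simp
      _ ≤ (m:ℝ) * (1 - n*t) := by nlinarith
      _ = (1 - n*t) * m := by ring
  have hxms : x + m*s = y := by
    rw [hs]; field_simp; ring
  have hchain := Fl_chain c hf hx hs0 hsle m
  rw [hxms] at hchain
  rw [hchain]
  have hterm : ∀ i ∈ Finset.range m, |wrep f (x + i*s) (x + (i+1)*s)| ≤ 1 - n*t := by
    intro i _
    apply wrep_small c hf
    have : (x + (i+1)*s) - (x + i*s) = s := by ring
    rw [this, abs_of_nonneg hs0]
    exact hsle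
  calc |∑ i ∈ Finset.range m, wrep f (x + i*s) (x + (i+1)*s)|
      ≤ ∑ i ∈ Finset.range m, |wrep f (x + i*s) (x + (i+1)*s)| :=
        Finset.abs_sum_le_sum_abs _ _
    _ ≤ ∑ _i ∈ Finset.range m, (1 - n*t) := Finset.sum_le_sum hterm
    _ = (m:ℝ) * (1 - n*t) := by
        rw [Finset.sum_const, Finset.card_range, nsmul_eq_mul]
    _ ≤ (y - x) + (1 - n*t) := by
        have h2 : (m:ℝ) < (y-x)/(1 - n*t) + 1 :=
          Nat.ceil_lt_add_one (le_of_lt (div_pos (by linarith) he0))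
        have h3 : (y-x)/(1-n*t) * (1-n*t) = y - x := by field_simp
        nlinarith

lemma Fl_coe (c : Cfg t n) (hf : CP t f) {x y : ℝ} (hx : 0 ≤ x) (hxy : x ≤ y) :
    ((Fl f (1 - n*t) y - Fl f (1 - n*t) x : ℝ) : 𝕋) = f ↑y - f ↑x := by
  have he0 := c.he0
  rcases eq_or_lt_of_le hxy with rfl | hlt
  · simp
  set m : ℕ := ⌈(y - x)/(1 - n*t)⌉₊ with hm
  have hm1 : 1 ≤ m := Nat.one_le_ceil_iff.mpr (div_pos (by linarith) he0)
  have hmr : (0:ℝ) < m := by exact_mod_cast hm1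
  set s : ℝ := (y - x)/m with hs
  have hs0 : 0 ≤ s := by rw [hs]; exact div_nonneg (by linarith) (le_of_lt hmr)
  have hsle : s ≤ 1 - n*t := by
    rw [hs, div_le_iff₀ hmr]
    have h1 : (y - x)/(1 - n*t) ≤ m := Nat.le_ceil _
    calc y - x = ((y-x)/(1 - n*t)) * (1 - n*t) := by field_simp
      _ ≤ (m:ℝ) * (1 - n*t) := by nlinarith
      _ = (1 - n*t) * m := by ring
  have hxms : x + m*s = y := by rw [hs]; field_simp; ring
  have hchain := Fl_chain c hf hx hs0 hsle m
  rw [hxms] at hchain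
  rw [hchain]
  have hcoesum : ((∑ i ∈ Finset.range m, wrep f (x + i*s) (x + (i+1)*s) : ℝ) : 𝕋)
      = ∑ i ∈ Finset.range m, ((wrep f (x + i*s) (x + (i+1)*s) : ℝ) : 𝕋) := by
    exact map_sum (QuotientAddGroup.mk' _) _ _
  rw [hcoesum]
  have : ∀ i ∈ Finset.range m, ((wrep f (x + i*s) (x + (i+1)*s) : ℝ) : 𝕋)
      = f ↑(x + (i+1)*s) - f ↑(x + i*s) := fun i _ => wrep_coe f _ _
  rw [Finset.sum_congr rfl this]
  have htel : ∑ i ∈ Finset.range m, (f ((x + (i+1)*s : ℝ) : 𝕋) - f ((x + i*s : ℝ) : 𝕋))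
      = f ((x + m*s : ℝ) : 𝕋) - f ((x + 0*s : ℝ) : 𝕋) := by
    have := Finset.sum_range_sub (f := fun i : ℕ => f ((x + i*s : ℝ) : 𝕋)) m
    convert this using 2 <;> push_cast <;> ring_nf
  rw [htel, hxms]
  norm_num

lemma Fl_trans (c : Cfg t n) (hf : CP t f) {x y : ℝ} (hx : 0 ≤ x) (hxy : x ≤ y) :
    Fl f (1 - n*t) (y+1) - Fl f (1 - n*t) (x+1) = Fl f (1 - n*t) y - Fl f (1 - n*t) x := by
  have he0 := c.he0
  rcases eq_or_lt_of_le hxy with rfl | hlt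
  · simp
  set m : ℕ := ⌈(y - x)/(1 - n*t)⌉₊ with hm
  have hm1 : 1 ≤ m := Nat.one_le_ceil_iff.mpr (div_pos (by linarith) he0)
  have hmr : (0:ℝ) < m := by exact_mod_cast hm1
  set s : ℝ := (y - x)/m with hs
  have hs0 : 0 ≤ s := by rw [hs]; exact div_nonneg (by linarith) (le_of_lt hmr)
  have hsle : s ≤ 1 - n*t := by
    rw [hs, div_le_iff₀ hmr]
    have h1 : (y - x)/(1 - n*t) ≤ m := Nat.le_ceil _
    calc y - x = ((y-x)/(1 - n*t)) * (1 - n*t) := by field_simp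
      _ ≤ (m:ℝ) * (1 - n*t) := by nlinarith
      _ = (1 - n*t) * m := by ring
  have hxms : x + m*s = y := by rw [hs]; field_simp; ring
  have hchain := Fl_chain c hf hx hs0 hsle m
  rw [hxms] at hchain
  have hchain2 := Fl_chain c hf (x := x+1) (by linarith) hs0 hsle m
  have hxms2 : x + 1 + m*s = y + 1 := by linarith
  rw [hxms2] at hchain2
  rw [hchain, hchain2]
  apply Finset.sum_congr rfl
  intro i _
  have e1 : x + 1 + i*s = (x + i*s) + 1 := by ring
  have e2 : x + 1 + (i+1)*s = (x + (i+1)*s) + 1 := by ring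
  rw [e1, e2]
  apply wrep_shift c hf
  have : (x + (i+1)*s) - (x + i*s) = s := by ring
  rw [this, abs_of_nonneg hs0]
  exact hsle

lemma Fl_add_one (c : Cfg t n) (hf : CP t f) {x : ℝ} (hx : 0 ≤ x) :
    Fl f (1 - n*t) (x+1) = Fl f (1 - n*t) x + (Fl f (1 - n*t) 1 - Fl f (1 - n*t) 0) := by
  have := Fl_trans c hf (x := 0) (y := x) le_rfl hx
  simp only [zero_add] at this
  linarith

lemma Fl_add_nat (c : Cfg t n) (hf : CP t f) {x : ℝ} (hx : 0 ≤ x) (P : ℕ) :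
    Fl f (1 - n*t) (x + P) = Fl f (1 - n*t) x + P * (Fl f (1 - n*t) 1 - Fl f (1 - n*t) 0) := by
  induction P with
  | zero => simp
  | succ P ih =>
      have e1 : x + (P+1:ℕ) = (x + P) + 1 := by push_cast; ring
      rw [e1, Fl_add_one c hf (by positivity), ih]
      push_cast
      ring


lemma D_int (c : Cfg t n) (hf : CP t f) :
    ∃ k : ℤ, Fl f (1 - n*t) 1 - Fl f (1 - n*t) 0 = k := by
  apply tcoe_int
  rw [Fl_coe c hf le_rfl zero_le_one]
  have : ((1:ℝ) : 𝕋) = ((0:ℝ) : 𝕋) := by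
    have := tcoe_add_one 0
    simpa using this
  rw [this]
  simp

lemma Fl_dist (c : Cfg t n) (hf : CP t f) {x y : ℝ} (hx : 0 ≤ x) (hxy : x ≤ y) :
    dist (f ↑x) (f ↑y)
      = |(Fl f (1 - n*t) y - Fl f (1 - n*t) x) -
          round (Fl f (1 - n*t) y - Fl f (1 - n*t) x)| := by
  rw [dist_eq_norm, norm_sub_rev, ← Fl_coe c hf hx hxy, tnorm_eq]

lemma round_cases (A : ℝ) (hA0 : 0 < A) (hA1 : A < 1) : round A = 0 ∨ round A = 1 := by
  have h := abs_sub_round A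
  have h1 : |A - round A| ≤ 1/2 := h
  rcases le_or_gt (round A) (-1) with hr | hr
  · exfalso
    have : ((round A : ℤ) : ℝ) ≤ -1 := by exact_mod_cast hr
    have : A - round A ≥ 1 := by linarith
    have := abs_le.mp h1
    linarith [this.2]
  rcases le_or_gt 2 (round A) with hr2 | hr2
  · exfalso
    have : (2:ℝ) ≤ ((round A : ℤ) : ℝ) := by exact_mod_cast hr2
    have : A - round A ≤ -1 := by linarith
    have := abs_le.mp h1
    linarith [this.1]
  · omega

lemma band_lower (c : Cfg t n) (hf : CP t f) {x : ℝ} (hx : 0 ≤ x) :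
    t < |Fl f (1 - n*t) (x+t) - Fl f (1 - n*t) x| := by
  have ht0 := c.ht0
  have ht2 := c.ht2
  obtain ⟨A, hA⟩ : ∃ A : ℝ, A = Fl f (1 - n*t) (x+t) - Fl f (1 - n*t) x := ⟨_, rfl⟩
  rw [← hA]
  have hdom : t ≤ dist ((x:ℝ) : 𝕋) ((x + t : ℝ) : 𝕋) :=
    tdist_ge x t le_rfl (by linarith) (le_of_lt ht0)
  have hd := hf x (x+t) hdom
  rw [Fl_dist c hf hx (by linarith), ← hA] at hd
  have habs : |A - round A| ≤ 1/2 := abs_sub_round A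
  rcases eq_or_ne (round A) 0 with hr | hr
  · rw [hr] at hd
    simpa using hd
  · have h1 : (1:ℝ) ≤ |(round A : ℝ)| := by
      have := Int.one_le_abs hr
      exact_mod_cast this
    have h2 : |(round A : ℝ)| ≤ |A| + |A - round A| := by
      calc |(round A:ℝ)| = |A - (A - round A)| := by ring_nf
        _ ≤ |A| + |A - round A| := abs_sub _ _
    linarith

lemma band_upper (c : Cfg t n) (hf : CP t f) {x : ℝ} (hx : 0 ≤ x) :
    |Fl f (1 - n*t) (x+t) - Fl f (1 - n*t) x| ≤ t + (1 - n*t) := by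
  have := Fl_speed c hf (x := x) (y := x + t) hx (by linarith [c.ht0])
  simpa using this

lemma delta_coherent (c : Cfg t n) (hf : CP t f) {x y : ℝ} (hx : 0 ≤ x) (hxy : x ≤ y)
    (hclose : y - x ≤ (t - (1 - n*t))/2) (hpx : t < Fl f (1 - n*t) (x+t) - Fl f (1 - n*t) x) :
    t < Fl f (1 - n*t) (y+t) - Fl f (1 - n*t) y := by
  have he0 := c.he0
  have helt := c.helt
  have ht0 := c.ht0
  set Dx := Fl f (1 - n*t) (x+t) - Fl f (1 - n*t) x with hDx
  set Dy := Fl f (1 - n*t) (y+t) - Fl f (1 - n*t) y with hDy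
  have hb := band_lower c hf (x := y) (by linarith)
  rw [← hDy] at hb
  rcases abs_cases Dy with ⟨h1, _⟩ | ⟨h1, _⟩
  · linarith
  · exfalso
    have hyneg : Dy < -t := by linarith
    have hs1 : |Fl f (1 - n*t) (y+t) - Fl f (1 - n*t) (x+t)| ≤ (y - x) + (1 - n*t) := by
      have := Fl_speed c hf (x := x + t) (y := y + t) (by linarith) (by linarith)
      have e : y + t - (x + t) = y - x := by ring
      rw [e] at this
      exact this
    have hs2 : |Fl f (1 - n*t) y - Fl f (1 - n*t) x| ≤ (y - x) + (1 - n*t) :=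
      Fl_speed c hf hx hxy
    have : Dy - Dx = (Fl f (1 - n*t) (y+t) - Fl f (1 - n*t) (x+t)) -
        (Fl f (1 - n*t) y - Fl f (1 - n*t) x) := by rw [hDy, hDx]; ring
    have habs := abs_le.mp hs1
    have habs2 := abs_le.mp hs2
    linarith [habs.1, habs.2, habs2.1, habs2.2]

lemma delta_pos_all (c : Cfg t n) (hf : CP t f)
    (h0 : 0 < Fl f (1 - n*t) (0+t) - Fl f (1 - n*t) 0) :
    ∀ x : ℝ, 0 ≤ x → t < Fl f (1 - n*t) (x+t) - Fl f (1 - n*t) x := by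
  have he0 := c.he0
  have helt := c.helt
  set ρ := (t - (1 - n*t))/2 with hρ
  have hρ0 : 0 < ρ := by rw [hρ]; linarith
  have hbase : t < Fl f (1 - n*t) (0+t) - Fl f (1 - n*t) 0 := by
    have hb := band_lower c hf (x := (0:ℝ)) le_rfl
    rcases abs_cases (Fl f (1 - n*t) (0+t) - Fl f (1 - n*t) 0) with ⟨h1, _⟩ | ⟨h1, _⟩
    · linarith
    · linarith
  have key : ∀ k : ℕ, ∀ x : ℝ, 0 ≤ x → x ≤ k * ρ →
      t < Fl f (1 - n*t) (x+t) - Fl f (1 - n*t) x := by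
    intro k
    induction k with
    | zero =>
        intro x hx0 hxk
        have : x = 0 := by simp at hxk; linarith
        rw [this]; exact hbase
    | succ k ih =>
        intro x hx0 hxk
        rcases le_or_gt x (k * ρ) with hcase | hcase
        · exact ih x hx0 hcase
        · rcases le_or_gt x ρ with hcase2 | hcase2
          · have := delta_coherent c hf (x := 0) (y := x) le_rfl hx0
              (by rw [← hρ]; linarith) hbase
            exact this
          · have hk0 : 0 ≤ x - ρ := by linarith
            have hkk : x - ρ ≤ k * ρ := by push_cast at hxk ⊢; linarith
            have hprev := ih (x - ρ) hk0 hkk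
            have := delta_coherent c hf (x := x - ρ) (y := x) hk0
              (show x - ρ ≤ x by linarith)
              (by have e : x - (x - ρ) = ρ := by ring
                  rw [e, hρ]) hprev
            exact this
  intro x hx
  refine key (⌈x/ρ⌉₊) x hx ?_
  have h1 : x/ρ ≤ (⌈x/ρ⌉₊ : ℝ) := Nat.le_ceil _
  calc x = (x/ρ)*ρ := by field_simp
    _ ≤ (⌈x/ρ⌉₊ : ℝ) * ρ := by nlinarith

lemma D_eq_one (c : Cfg t n) (hf : CP t f)
    (hall : ∀ x : ℝ, 0 ≤ x → t < Fl f (1 - n*t) (x+t) - Fl f (1 - n*t) x) :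
    Fl f (1 - n*t) 1 - Fl f (1 - n*t) 0 = 1 := by
  have he0 := c.he0
  have helt := c.helt
  have ht0 := c.ht0
  set D := Fl f (1 - n*t) 1 - Fl f (1 - n*t) 0 with hD
  obtain ⟨k, hk⟩ := D_int c hf
  have htel : ∀ m : ℕ, Fl f (1-n*t) ((m:ℝ)*t) - Fl f (1-n*t) 0
      = ∑ i ∈ Finset.range m,
          (Fl f (1-n*t) ((i:ℝ)*t+t) - Fl f (1-n*t) ((i:ℝ)*t)) := by
    intro m
    induction m with
    | zero => simp
    | succ m ih =>
        rw [Finset.sum_range_succ, ← ih]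
        have e : (((m+1):ℕ):ℝ)*t = (m:ℝ)*t + t := by push_cast; ring
        rw [e]
        ring
  have hsum : ((n:ℝ)+1)*t < Fl f (1-n*t) ((((n+1):ℕ):ℝ)*t) - Fl f (1-n*t) 0 := by
    rw [htel (n+1)]
    have hterm : ∀ i ∈ Finset.range (n+1),
        t < Fl f (1-n*t) ((i:ℝ)*t+t) - Fl f (1-n*t) ((i:ℝ)*t) := by
      intro i _
      exact hall ((i:ℝ)*t) (by positivity)
    have h0 : ∑ _i ∈ Finset.range (n+1), t
        < ∑ i ∈ Finset.range (n+1),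
            (Fl f (1-n*t) ((i:ℝ)*t+t) - Fl f (1-n*t) ((i:ℝ)*t)) :=
      Finset.sum_lt_sum_of_nonempty (by simp) hterm
    have h1 : ∑ _i ∈ Finset.range (n+1), t = ((n:ℝ)+1)*t := by
      rw [Finset.sum_const, Finset.card_range, nsmul_eq_mul]
      push_cast; ring
    linarith
  have hval : (((n+1):ℕ):ℝ)*t = (t - (1 - n*t)) + 1 := by push_cast; ring
  have hsplit : Fl f (1-n*t) ((((n+1):ℕ):ℝ)*t)
      = Fl f (1-n*t) (t - (1 - n*t)) + D := by
    rw [hval, Fl_add_one c hf (by linarith), ← hD]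
  have hspeed : Fl f (1-n*t) (t - (1 - n*t)) - Fl f (1-n*t) 0 ≤ t := by
    have := Fl_speed c hf (x := 0) (y := t - (1 - n*t)) le_rfl (by linarith)
    have h2 := (abs_le.mp this).2
    linarith
  have hDgt : (n:ℝ)*t < D := by
    rw [hsplit] at hsum
    linarith
  have hnt2 : (0:ℝ) < (n:ℝ)*t := by
    have hn : (2:ℝ) ≤ (n:ℝ) := by exact_mod_cast c.hn
    nlinarith
  have hk1 : 1 ≤ k := by
    have : (0:ℝ) < (k:ℝ) := by rw [← hk, ← hD] at *; linarith
    exact_mod_cast by exact_mod_cast (show (0:ℤ) < k from by exact_mod_cast this)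
  have hDle : D ≤ 1 + (1 - n*t) := by
    have := Fl_speed c hf (x := 0) (y := 1) le_rfl zero_le_one
    have h2 := (abs_le.mp this).2
    rw [hD]; linarith
  have hk2 : k ≤ 1 := by
    by_contra hcon
    push_neg at hcon
    have : (2:ℝ) ≤ (k:ℝ) := by exact_mod_cast hcon
    have he3 := c.he3
    rw [hD, hk] at hDle
    linarith
  have : k = 1 := le_antisymm hk2 hk1
  rw [hD, hk, this]
  norm_num

lemma family (c : Cfg t n) (hf : CP t f)
    (hD : Fl f (1 - n*t) 1 - Fl f (1 - n*t) 0 = 1) :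
    ∀ z h : ℝ, 0 ≤ z → t ≤ h → h ≤ t + (1 - n*t) →
      t < Fl f (1 - n*t) (z+h) - Fl f (1 - n*t) z := by
  intro z h hz hth hht
  have he0 := c.he0
  have ht0 := c.ht0
  have ht2 := c.ht2
  have hte1 := c.hte1
  have ht2e := c.ht2e
  obtain ⟨A, hA⟩ : ∃ A : ℝ, A = Fl f (1 - n*t) (z+h) - Fl f (1 - n*t) z := ⟨_, rfl⟩
  rw [← hA]
  have hupper : A ≤ h + (1 - n*t) := by
    have := Fl_speed c hf (x := z) (y := z + h) hz (by linarith)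
    have h2 := (abs_le.mp this).2
    rw [hA]; linarith
  have hlower : h - (1 - n*t) ≤ A := by
    have hB := Fl_speed c hf (x := z + h) (y := z + 1) (by linarith) (by linarith)
    have h2 := (abs_le.mp hB).2
    have h3 : Fl f (1 - n*t) (z+1) = Fl f (1 - n*t) z + 1 := by
      rw [Fl_add_one c hf hz, hD]
    rw [hA]
    have e : z + 1 - (z + h) = 1 - h := by ring
    rw [e] at h2
    linarith
  have helt := c.helt
  have hA0 : 0 < A := by linarith
  have hA1 : A < 1 := by linarith
  have hdom : t ≤ dist ((z:ℝ) : 𝕋) ((z + h : ℝ) : 𝕋) :=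
    tdist_ge z h hth (by linarith) (le_of_lt ht0)
  have hd := hf z (z+h) hdom
  rw [Fl_dist c hf hz (by linarith), ← hA] at hd
  rcases round_cases A hA0 hA1 with hr | hr
  · rw [hr] at hd
    simp at hd
    calc t < |A| := hd
      _ = A := abs_of_pos hA0
  · have := abs_sub_round A
    rw [hr] at this
    have h1 : (1:ℝ) - A ≤ 1/2 := by
      have := (abs_le.mp this).1
      push_cast at this ⊢
      linarith
    linarith

/-- Rational pigeonhole approximation. -/
lemma approx (c : Cfg t n) {η : ℝ} (hη : 0 < η) :
    ∃ (q : ℕ) (K : ℤ), 1 ≤ q ∧ (q:ℝ)*t - K ≠ 0 ∧ |(q:ℝ)*t - K| < η := by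
  classical
  set N : ℕ := ⌈1/η⌉₊ + 1 with hN
  have hN0 : 0 < N := by omega
  have hNr : (0:ℝ) < N := by exact_mod_cast hN0
  have hNη : 1/(N:ℝ) < η := by
    rw [div_lt_iff₀ hNr, mul_comm]
    have h1 : 1/η < (N:ℝ) := by
      rw [hN]
      push_cast
      have := Nat.le_ceil (1/η)
      linarith
    have h2 : (1/η)*η < (N:ℝ)*η := by nlinarith
    have h3 : (1/η)*η = 1 := by field_simp
    linarith
  set g : ℕ → ℕ := fun i => ⌊Int.fract ((i:ℝ)*t) * N⌋₊ with hg
  have hmaps : ∀ i ∈ Finset.range (N+1), g i ∈ Finset.range N := by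
    intro i _
    rw [Finset.mem_range, hg]
    have h1 : Int.fract ((i:ℝ)*t) * N < N := by
      have := Int.fract_lt_one ((i:ℝ)*t)
      nlinarith
    exact (Nat.floor_lt (mul_nonneg (Int.fract_nonneg _) (le_of_lt hNr))).mpr h1
  obtain ⟨i, hi, j, hj, hij, hgij⟩ :=
    Finset.exists_ne_map_eq_of_card_lt_of_maps_to
      (by rw [Finset.card_range, Finset.card_range]; omega) hmaps
  -- wlog i < j
  have key : ∀ i j : ℕ, i < j → g i = g j →
      ∃ (q : ℕ) (K : ℤ), 1 ≤ q ∧ (q:ℝ)*t - K ≠ 0 ∧ |(q:ℝ)*t - K| < η := by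
    intro i j hlt hgeq
    refine ⟨j - i, ⌊(j:ℝ)*t⌋ - ⌊(i:ℝ)*t⌋, by omega, ?_, ?_⟩
    · intro hcon
      have hq0 : ((j-i:ℕ):ℝ) ≠ 0 := by
        have : 0 < j - i := by omega
        positivity
      apply c.irr
      refine ⟨((⌊(j:ℝ)*t⌋ - ⌊(i:ℝ)*t⌋ : ℤ) : ℚ) / ((j - i : ℕ) : ℚ), ?_⟩
      push_cast
      rw [div_eq_iff (by exact_mod_cast hq0)]
      push_cast at hcon
      linarith
    · have e : ((j-i:ℕ):ℝ)*t - ((⌊(j:ℝ)*t⌋ - ⌊(i:ℝ)*t⌋ : ℤ):ℝ)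
          = Int.fract ((j:ℝ)*t) - Int.fract ((i:ℝ)*t) := by
        rw [Int.fract, Int.fract]
        push_cast [Nat.cast_sub (le_of_lt hlt)]
        ring
      rw [e]
      have hbound : ∀ m : ℕ, (g m : ℝ) ≤ Int.fract ((m:ℝ)*t) * N ∧
          Int.fract ((m:ℝ)*t) * N < (g m : ℝ) + 1 := by
        intro m
        have hnn : (0:ℝ) ≤ Int.fract ((m:ℝ)*t) * N :=
          mul_nonneg (Int.fract_nonneg _) (le_of_lt hNr)
        constructor
        · exact Nat.floor_le hnn
        · exact Nat.lt_floor_add_one _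
      obtain ⟨hi1, hi2⟩ := hbound i
      obtain ⟨hj1, hj2⟩ := hbound j
      rw [← hgeq] at hj1 hj2
      rw [abs_lt]
      have hd1 : (Int.fract ((j:ℝ)*t) - Int.fract ((i:ℝ)*t)) * N < 1 := by nlinarith
      have hd2 : -1 < (Int.fract ((j:ℝ)*t) - Int.fract ((i:ℝ)*t)) * N := by nlinarith
      have hηN : 1 < η * N := by rw [div_lt_iff₀ hNr] at hNη; linarith
      constructor
      · by_contra hcon
        push_neg at hcon
        have h7 := mul_le_mul_of_nonneg_right hcon (le_of_lt hNr)
        linarith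
      · by_contra hcon
        push_neg at hcon
        have h7 := mul_le_mul_of_nonneg_right hcon (le_of_lt hNr)
        linarith
  rcases lt_or_gt_of_ne hij with h | h
  · exact key i j h hgij
  · exact key j i h hgij.symm

set_option maxHeartbeats 1600000 in
lemma density (c : Cfg t n) (cc η : ℝ) (hη : 0 < η) (M₀ : ℕ) :
    ∃ m : ℕ, M₀ ≤ m ∧ 1 ≤ m ∧ Int.fract (cc - m*t) < η := by
  classical
  set η' := min η (1/2) with hη'
  have hη'0 : 0 < η' := by
    rw [hη']; exact lt_min hη (by norm_num)
  have hη'η : η' ≤ η := min_le_left _ _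
  have hη'12 : η' ≤ 1/2 := min_le_right _ _
  obtain ⟨q, K, hq1, hγ0, hγη⟩ := approx c hη'0
  set γ : ℝ := (q:ℝ)*t - K with hγ
  set cc' : ℝ := cc - M₀*t with hcc'
  have hqr : (0:ℝ) < q := by exact_mod_cast hq1
  -- we find m' ≥ 1 with fract (cc' - m'*t) < η'
  have main : ∃ m' : ℕ, 1 ≤ m' ∧ Int.fract (cc' - m'*t) < η' := by
    rcases lt_or_gt_of_ne hγ0 with hneg | hpos
    · -- γ < 0; δ := -γ
      set δ : ℝ := -γ with hδ
      have hδ0 : 0 < δ := by rw [hδ]; linarith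
      have hδη : δ < η' := by
        rw [hδ]
        have := abs_lt.mp hγη
        linarith [this.1]
      set z := Int.fract (cc' - q*t) with hz
      have hz0 : 0 ≤ z := Int.fract_nonneg _
      have hz1 : z < 1 := Int.fract_lt_one _
      set jj : ℕ := ⌈(1-z)/δ⌉₊ with hjj
      have hjj1 : 1 ≤ jj := Nat.one_le_ceil_iff.mpr (div_pos (by linarith) hδ0)
      have hup : 1 - z ≤ (jj:ℝ)*δ := by
        have h1 : (1-z)/δ ≤ (jj:ℝ) := Nat.le_ceil _
        calc 1 - z = ((1-z)/δ)*δ := by field_simp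
          _ ≤ (jj:ℝ)*δ := by nlinarith
      have hdown : (jj:ℝ)*δ < 1 - z + δ := by
        have h1 : (jj:ℝ) < (1-z)/δ + 1 := Nat.ceil_lt_add_one (le_of_lt (div_pos (by linarith) hδ0))
        have h2 : ((1-z)/δ)*δ = 1 - z := by field_simp
        nlinarith
      refine ⟨(1 + jj) * q, Nat.mul_pos (by omega) (by omega), ?_⟩
      have harith : cc' - ((1+jj)*q : ℕ)*t = (cc' - q*t) + jj*δ - jj*K := by
        have e1 : (((1+jj)*q : ℕ):ℝ) = (1 + (jj:ℝ)) * q := by push_cast; ring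
        rw [e1, hδ, hγ]
        push_cast
        ring
      have hfr : Int.fract (cc' - ((1+jj)*q : ℕ)*t) = Int.fract (z + jj*δ) := by
        rw [harith]
        have e2 : (cc' - q*t) + jj*δ - jj*K
            = (z + jj*δ) + (((⌊cc' - q*t⌋ - (jj:ℤ)*K) : ℤ) : ℝ) := by
          rw [hz, Int.fract]
          push_cast
          ring
        rw [e2, Int.fract_add_intCast]
      rw [hfr]
      have hval : Int.fract (z + jj*δ) = z + jj*δ - 1 := by
        have h1 : 1 ≤ z + jj*δ := by linarith
        have h2 : z + jj*δ < 2 := by linarith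
        have : Int.fract (z + jj*δ) = Int.fract ((z + jj*δ - 1) + (1:ℤ)) := by norm_num
        rw [this, Int.fract_add_intCast, Int.fract_eq_self.mpr ⟨by linarith, by linarith⟩]
      rw [hval]
      linarith
    · -- γ > 0
      set z := Int.fract (cc' - q*t) with hz
      have hz0 : 0 ≤ z := Int.fract_nonneg _
      have hz1 : z < 1 := Int.fract_lt_one _
      have hγη' : γ < η' := by
        have := abs_lt.mp hγη
        linarith [this.2]
      set k2 : ℕ := ⌊z/γ⌋₊ with hk2
      have hk2le : (k2:ℝ)*γ ≤ z := by
        have h1 : (k2:ℝ) ≤ z/γ := Nat.floor_le (by positivity)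
        calc (k2:ℝ)*γ ≤ (z/γ)*γ := by nlinarith
          _ = z := by field_simp
      have hk2lt : z < ((k2:ℝ)+1)*γ := by
        have h1 : z/γ < (k2:ℝ)+1 := Nat.lt_floor_add_one _
        calc z = (z/γ)*γ := by field_simp
          _ < ((k2:ℝ)+1)*γ := by nlinarith
      refine ⟨(1 + k2) * q, Nat.mul_pos (by omega) (by omega), ?_⟩
      have harith : cc' - ((1+k2)*q : ℕ)*t = (cc' - q*t) - k2*γ - k2*K := by
        have e1 : (((1+k2)*q : ℕ):ℝ) = (1 + (k2:ℝ)) * q := by push_cast; ring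
        rw [e1, hγ]
        push_cast
        ring
      have hfr : Int.fract (cc' - ((1+k2)*q : ℕ)*t) = Int.fract (z - k2*γ) := by
        rw [harith]
        have e2 : (cc' - q*t) - k2*γ - k2*K
            = (z - k2*γ) + (((⌊cc' - q*t⌋ - (k2:ℤ)*K) : ℤ) : ℝ) := by
          rw [hz, Int.fract]
          push_cast
          ring
        rw [e2, Int.fract_add_intCast]
      rw [hfr]
      have hk2γ : 0 ≤ (k2:ℝ)*γ := mul_nonneg (Nat.cast_nonneg _) (le_of_lt hpos)
      have hval : Int.fract (z - k2*γ) = z - k2*γ := by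
        apply Int.fract_eq_self.mpr
        exact ⟨by linarith, by linarith⟩
      rw [hval]
      linarith
  obtain ⟨m', hm'1, hm'⟩ := main
  refine ⟨M₀ + m', by omega, by omega, ?_⟩
  have e : cc - ((M₀ + m' : ℕ):ℝ)*t = cc' - m'*t := by
    rw [hcc']
    push_cast
    ring
  rw [e]
  exact lt_of_lt_of_le hm' hη'η

lemma grow (c : Cfg t n) (hf : CP t f)
    (hD : Fl f (1 - n*t) 1 - Fl f (1 - n*t) 0 = 1) :
    ∀ x y : ℝ, 0 ≤ x → x ≤ y → y - x ≤ Fl f (1 - n*t) y - Fl f (1 - n*t) x := by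
  intro x y hx hxy
  have he0 := c.he0
  have ht0 := c.ht0
  by_contra hcon
  push_neg at hcon
  obtain ⟨gap, hgap⟩ : ∃ g : ℝ, g = (y - x) - (Fl f (1 - n*t) y - Fl f (1 - n*t) x) :=
    ⟨_, rfl⟩
  have hgap0 : 0 < gap := by rw [hgap]; linarith
  obtain ⟨η, hη⟩ : ∃ η : ℝ, η = min gap ((1 - n*t)/2) := ⟨_, rfl⟩
  have hη0 : 0 < η := by rw [hη]; exact lt_min hgap0 (by linarith)
  have hηgap : η ≤ gap := by rw [hη]; exact min_le_left _ _
  have hηε : η < 1 - n*t := by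
    rw [hη]
    calc min gap ((1 - n*t)/2) ≤ (1 - n*t)/2 := min_le_right _ _
      _ < 1 - n*t := by linarith
  obtain ⟨M₀, hM₀⟩ : ∃ M : ℕ, M = ⌈(y-x)/t⌉₊ + 1 := ⟨_, rfl⟩
  obtain ⟨m, hMm, hm1, hfr⟩ := density c (y - x) η hη0 M₀
  have hmr : (0:ℝ) < m := by exact_mod_cast hm1
  have hm1r : (1:ℝ) ≤ m := by exact_mod_cast hm1
  obtain ⟨U, hU⟩ : ∃ U : ℝ, U = Int.fract (y - x - m*t) := ⟨_, rfl⟩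
  rw [← hU] at hfr
  have hU0 : 0 ≤ U := by rw [hU]; exact Int.fract_nonneg _
  obtain ⟨Pz, hPz⟩ : ∃ P : ℤ, P = ⌊y - x - m*t⌋ := ⟨_, rfl⟩
  have hfloor : y - x - m*t = Pz + U := by
    rw [hU, hPz, Int.fract]
    ring
  have hPzneg : Pz ≤ -1 := by
    have h1 : y - x < M₀ * t := by
      have h2 : (y-x)/t ≤ (⌈(y-x)/t⌉₊:ℝ) := Nat.le_ceil _
      have h3 : ((⌈(y-x)/t⌉₊:ℕ):ℝ) < (M₀:ℝ) := by rw [hM₀]; push_cast; linarith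
      calc y - x = ((y-x)/t)*t := by field_simp
        _ ≤ (⌈(y-x)/t⌉₊:ℝ)*t := by nlinarith
        _ < (M₀:ℝ)*t := by nlinarith
    have h4 : (M₀:ℝ)*t ≤ (m:ℝ)*t := by
      have : (M₀:ℝ) ≤ (m:ℝ) := by exact_mod_cast hMm
      nlinarith
    have h5 : y - x - m*t < 0 := by linarith
    have h6 : (Pz:ℝ) ≤ y - x - m*t := by rw [hPz]; exact Int.floor_le _
    have h7 : (Pz:ℝ) < 0 := by linarith
    have h8 : Pz < 0 := by exact_mod_cast h7
    omega
  obtain ⟨P, hP⟩ : ∃ P : ℕ, P = (-Pz).toNat := ⟨_, rfl⟩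
  have hPval : (P:ℝ) = -(Pz:ℝ) := by
    have h9 : (0:ℤ) ≤ -Pz := by omega
    have h10 : ((-Pz).toNat : ℤ) = -Pz := Int.toNat_of_nonneg h9
    rw [hP]
    exact_mod_cast h10
  obtain ⟨h, hh⟩ : ∃ h : ℝ, h = t + U/m := ⟨_, rfl⟩
  have hht : t ≤ h := by
    rw [hh]
    have : 0 ≤ U/m := div_nonneg hU0 (le_of_lt hmr)
    linarith
  have hhε : h ≤ t + (1 - n*t) := by
    rw [hh]
    have h1 : U/m ≤ U := by
      rw [div_le_iff₀ hmr]
      nlinarith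
    linarith
  have hh0 : 0 < h := by linarith
  have htel : ∀ mm : ℕ, Fl f (1-n*t) (x + (mm:ℝ)*h) - Fl f (1-n*t) x
      = ∑ i ∈ Finset.range mm,
          (Fl f (1-n*t) ((x + (i:ℝ)*h)+h) - Fl f (1-n*t) (x + (i:ℝ)*h)) := by
    intro mm
    induction mm with
    | zero => simp
    | succ mm ih =>
        rw [Finset.sum_range_succ, ← ih]
        have e : x + (((mm+1):ℕ):ℝ)*h = (x + (mm:ℝ)*h) + h := by push_cast; ring
        rw [e]
        ring
  have hterm : ∀ i ∈ Finset.range m,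
      t < Fl f (1-n*t) ((x + (i:ℝ)*h)+h) - Fl f (1-n*t) (x + (i:ℝ)*h) := by
    intro i _
    have hzi : 0 ≤ x + (i:ℝ)*h := by
      have : (0:ℝ) ≤ (i:ℝ)*h := mul_nonneg (Nat.cast_nonneg _) (le_of_lt hh0)
      linarith
    exact family c hf hD (x + (i:ℝ)*h) h hzi hht hhε
  have hsum : (m:ℝ)*t < Fl f (1-n*t) (x + (m:ℝ)*h) - Fl f (1-n*t) x := by
    rw [htel m]
    have h0 : ∑ _i ∈ Finset.range m, t
        < ∑ i ∈ Finset.range m,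
            (Fl f (1-n*t) ((x + (i:ℝ)*h)+h) - Fl f (1-n*t) (x + (i:ℝ)*h)) :=
      Finset.sum_lt_sum_of_nonempty (by simp; omega) hterm
    have h1 : ∑ _i ∈ Finset.range m, t = (m:ℝ)*t := by
      rw [Finset.sum_const, Finset.card_range, nsmul_eq_mul]
    linarith
  have hmU : (m:ℝ)*(U/m) = U := by field_simp
  have hxmh : x + (m:ℝ)*h = y + (P:ℝ) := by
    rw [hh, hPval, mul_add, hmU]
    linarith [hfloor]
  have hy0 : (0:ℝ) ≤ y := le_trans hx hxy
  have hFlP : Fl f (1-n*t) (y + (P:ℝ)) = Fl f (1-n*t) y + (P:ℝ) := by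
    have hcalc := Fl_add_nat c hf (x := y) hy0 P
    rw [hD] at hcalc
    rw [hcalc]
    ring
  rw [hxmh, hFlP] at hsum
  have hmtP : (m:ℝ)*t - (P:ℝ) = (y - x) - U := by
    rw [hPval]
    linarith [hfloor]
  have hUgap : U < gap := lt_of_lt_of_le hfr hηgap
  rw [hgap] at hUgap
  linarith

lemma main_core (c : Cfg t n) (hf : CP t f)
    (hpos : 0 < Fl f (1 - n*t) (0+t) - Fl f (1 - n*t) 0) : False := by
  have ht0 := c.ht0
  have ht2 := c.ht2
  have hall := delta_pos_all c hf hpos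
  have hD := D_eq_one c hf hall
  have h1 : t < Fl f (1 - n*t) t - Fl f (1 - n*t) 0 := by
    have := hall 0 le_rfl
    simpa using this
  have h2 : 1 - t ≤ Fl f (1 - n*t) 1 - Fl f (1 - n*t) t :=
    grow c hf hD t 1 (le_of_lt ht0) (by linarith)
  linarith

lemma wrep_neg (c : Cfg t n) (hf : CP t f) (hg : CP t (fun z => -(f z))) {a b : ℝ}
    (h : |b - a| ≤ 1 - n*t) :
    wrep (fun z => -(f z)) a b = - wrep f a b := by
  symm
  apply wrep_unique' c (f := fun z => -(f z))
  · have h1 : ((-(wrep f a b) : ℝ) : 𝕋) = -((wrep f a b : ℝ) : 𝕋) :=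
      AddCircle.coe_neg 1
    rw [h1, wrep_coe]
    abel
  · have h1 := wrep_small c hf h
    have h2 := wrep_small c hg (f := fun z => -(f z)) h
    have he3 := c.he3
    calc |-(wrep f a b) - wrep (fun z => -(f z)) a b|
        ≤ |(wrep f a b)| + |wrep (fun z => -(f z)) a b| := by
          rw [abs_sub_comm]
          calc |wrep (fun z => -(f z)) a b - -(wrep f a b)|
              ≤ |wrep (fun z => -(f z)) a b| + |-(wrep f a b)| := abs_sub _ _
            _ = |wrep (fun z => -(f z)) a b| + |wrep f a b| := by rw [abs_neg]
            _ = |(wrep f a b)| + |wrep (fun z => -(f z)) a b| := by ring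
      _ < 1 := by linarith

lemma Fl_neg (c : Cfg t n) (hf : CP t f) (hg : CP t (fun z => -(f z))) {x : ℝ} (hx : 0 ≤ x) :
    Fl (fun z => -(f z)) (1 - n*t) x = - Fl f (1 - n*t) x := by
  have he0 := c.he0
  rw [Fl, Fl]
  have hK1 : ((⌊x/(1-n*t)⌋₊:ℝ))*(1-n*t) ≤ x := by
    have h1 : (⌊x/(1-n*t)⌋₊:ℝ) ≤ x/(1-n*t) := Nat.floor_le (by positivity)
    calc (⌊x/(1-n*t)⌋₊:ℝ)*(1-n*t) ≤ (x/(1-n*t))*(1-n*t) := by nlinarith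
      _ = x := by field_simp
  have hK2 : x < ((⌊x/(1-n*t)⌋₊:ℝ)+1)*(1-n*t) := by
    have h1 : x/(1-n*t) < (⌊x/(1-n*t)⌋₊:ℝ)+1 := Nat.lt_floor_add_one _
    calc x = (x/(1-n*t))*(1-n*t) := by field_simp
      _ < ((⌊x/(1-n*t)⌋₊:ℝ)+1)*(1-n*t) := by nlinarith
  have hterm : ∀ k ∈ Finset.range ⌊x/(1-n*t)⌋₊,
      wrep (fun z => -(f z)) ((k:ℝ)*(1-n*t)) (((k:ℝ)+1)*(1-n*t))
        = - wrep f ((k:ℝ)*(1-n*t)) (((k:ℝ)+1)*(1-n*t)) := by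
    intro k _
    apply wrep_neg c hf hg
    have e : ((k:ℝ)+1)*(1-n*t) - (k:ℝ)*(1-n*t) = 1-n*t := by ring
    rw [e, abs_of_nonneg (by linarith)]
  rw [Finset.sum_congr rfl hterm]
  have hlast : wrep (fun z => -(f z)) ((⌊x/(1-n*t)⌋₊:ℝ)*(1-n*t)) x
      = - wrep f ((⌊x/(1-n*t)⌋₊:ℝ)*(1-n*t)) x := by
    apply wrep_neg c hf hg
    rw [abs_of_nonneg (by linarith)]
    linarith
  rw [hlast, Finset.sum_neg_distrib]
  ring

lemma main_aux (c : Cfg t n) (hf : CP t f) : False := by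
  have ht0 := c.ht0
  have hb := band_lower c hf (x := (0:ℝ)) le_rfl
  rcases lt_trichotomy (Fl f (1 - n*t) (0+t) - Fl f (1 - n*t) 0) 0 with hneg | h0 | hpos
  · -- use -f
    set g : 𝕋 → 𝕋 := fun z => -(f z) with hgdef
    have hg : CP t g := by
      intro a b hab
      have := hf a b hab
      rw [hgdef]
      simp only []
      rw [dist_neg_neg]
      exact this
    apply main_core c hg
    rw [Fl_neg c hf hg (by linarith), Fl_neg c hf hg le_rfl]
    linarith
  · rw [h0] at hb
    simp at hb
    linarith
  · exact main_core c hf hpos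

end Main

lemma build_cfg {r : ℝ} (hr : 2 < r) (hirr : Irrational r) : Cfg (1/r) ⌊r⌋₊ := by
  have hr0 : (0:ℝ) < r := by linarith
  have hfl : (⌊r⌋₊:ℝ) < r := by
    refine lt_of_le_of_ne (Nat.floor_le (le_of_lt hr0)) ?_
    intro heq
    exact hirr ⟨(⌊r⌋₊ : ℚ), by push_cast; exact heq⟩
  have hfl2 : r < (⌊r⌋₊:ℝ) + 1 := Nat.lt_floor_add_one r
  refine ⟨?_, ?_, ?_, ?_, ?_, ?_⟩
  · rw [one_div]
    exact hirr.inv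
  · positivity
  · rw [div_lt_div_iff₀ hr0 (by norm_num)]
    linarith
  · exact Nat.le_floor (by exact_mod_cast hr.le)
  · rw [mul_one_div, div_lt_one hr0]
    exact hfl
  · rw [mul_one_div, lt_div_iff₀ hr0]
    linarith

end CircleAux

/-- For irrational `r > 2`, there is no cohomomorphism from `E_r^o` to `E_r^c`;
in particular, `E_r^c` and `E_r^o` are not equivalent under cohomomorphism. -/
theorem open_closed_circleGraph_not_equivalent_irrational (r : ℝ) (hr : 2 < r)
    (hirr : Irrational r) :
    (¬ ∃ f : AddCircle (1 : ℝ) → AddCircle (1 : ℝ),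
        IsCohom (openCircleGraph r) (closedCircleGraph r) f) ∧
    ¬ ((∃ f : AddCircle (1 : ℝ) → AddCircle (1 : ℝ),
          IsCohom (closedCircleGraph r) (openCircleGraph r) f) ∧
       (∃ g : AddCircle (1 : ℝ) → AddCircle (1 : ℝ),
          IsCohom (openCircleGraph r) (closedCircleGraph r) g)) := by
  have key : ¬ ∃ f : AddCircle (1 : ℝ) → AddCircle (1 : ℝ),
      IsCohom (openCircleGraph r) (closedCircleGraph r) f := by
    rintro ⟨f, hf⟩
    have hr0 : (0:ℝ) < r := by linarith
    have c := build_cfg hr hirr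
    have hcp : CP (1/r) f := by
      intro a b hd
      have ht0 : 0 < 1/r := by positivity
      have hne : ((a:ℝ) : AddCircle (1:ℝ)) ≠ ((b:ℝ) : AddCircle (1:ℝ)) := by
        intro heq
        rw [heq] at hd
        simp at hd
        linarith
      have hnadj : ¬ (openCircleGraph r).Adj ↑a ↑b := by
        intro hadj
        obtain ⟨-, hlt⟩ := hadj
        linarith
      obtain ⟨hne', hnadj'⟩ := hf _ _ hne hnadj
      by_contra hcon
      push_neg at hcon
      exact hnadj' ⟨hne', hcon⟩
    exact main_aux c hcp
  exact ⟨key, fun h => key h.2⟩
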